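/- arXiv:2109.03392 — 5 statements merged into one kernel-verified Lean document; each statement's English description precedes it below -/
import Mathlib

section
/- Let F : ℝ × ℝ^{2m} → ℝ^{2m} be the implicit constraint map of a planar linkage satisfying the topological ordering assumption, where only the first 2×2 block of rows depends on t and each non-motor movable node n_i with parents n_j, n_k (of strictly lower index) contributes rows ‖n_i − n_j‖² − l_ji² and ‖n_i − n_k‖² − l_ki². If at a configuration n every triangle area satisfies ⟨(n_j − n_i)^⊥, n_k − n_i⟩ ≥ ε > 0, then the Jacobian ∂F/∂n is a 2×2-block lower/upper triangular matrix whose determinant satisfies |det(∂F/∂n)| ≥ (4ε)^{m̄} > 0, where m̄ is the number of non-motor movable nodes; hence ∂F/∂n is invertible and the configuration is nonsingular. -/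
/-- Nonsingularity of the linkage Jacobian: a block upper-triangular Jacobian whose 2×2
diagonal blocks are `[[2(Xᵢ−Xⱼ), 2(Yᵢ−Yⱼ)],[2(Xᵢ−Xₖ), 2(Yᵢ−Yₖ)]]` has determinant of
absolute value at least `(4ε)^m̄ > 0` whenever every triangle's signed area is at least
`ε > 0`; hence the Jacobian is invertible. -/
theorem stmt_4 (m : ℕ) (ε : ℝ) (hε : 0 < ε)
    (x y xj yj xk yk : Fin m → ℝ)
    (M : Matrix (Fin m × Fin 2) (Fin m × Fin 2) ℝ)
    (htri : ∀ p q : Fin m × Fin 2, q.1 < p.1 → M p q = 0)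
    (hd00 : ∀ i : Fin m, M (i, 0) (i, 0) = 2 * (x i - xj i))
    (hd01 : ∀ i : Fin m, M (i, 0) (i, 1) = 2 * (y i - yj i))
    (hd10 : ∀ i : Fin m, M (i, 1) (i, 0) = 2 * (x i - xk i))
    (hd11 : ∀ i : Fin m, M (i, 1) (i, 1) = 2 * (y i - yk i))
    (harea : ∀ i : Fin m,
      ε ≤ (yj i - y i) * (xk i - x i) - (xj i - x i) * (yk i - y i)) :
    (4 * ε) ^ m ≤ |M.det| ∧ 0 < |M.det| ∧ IsUnit M := by
  have hBT : M.BlockTriangular Prod.fst := fun p q h => htri p q h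
  have hdet : M.det = ∏ i : Fin m, (M.toSquareBlock Prod.fst i).det :=
    hBT.det_fintype
  have hblock : ∀ i : Fin m, (M.toSquareBlock Prod.fst i).det
      = -(4 * ((yj i - y i) * (xk i - x i) - (xj i - x i) * (yk i - y i))) := by
    intro i
    let e : Fin 2 ≃ {p : Fin m × Fin 2 // p.1 = i} :=
      { toFun := fun j => ⟨(i, j), rfl⟩
        invFun := fun p => p.1.2
        left_inv := fun j => rfl
        right_inv := by rintro ⟨⟨a, b⟩, rfl⟩; rfl }
    rw [← Matrix.det_submatrix_equiv_self e, Matrix.det_fin_two]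
    simp only [Matrix.submatrix_apply, Matrix.toSquareBlock_def, Matrix.of_apply, e, Equiv.coe_fn_mk,
      hd00 i, hd01 i, hd10 i, hd11 i]
    ring
  have habs : |M.det|
      = ∏ i : Fin m, 4 * ((yj i - y i) * (xk i - x i) - (xj i - x i) * (yk i - y i)) := by
    rw [hdet, Finset.abs_prod]
    refine Finset.prod_congr rfl fun i _ => ?_
    rw [hblock i, abs_neg, abs_of_nonneg (by nlinarith [harea i])]
  have hle : (4 * ε) ^ m ≤ |M.det| := by
    rw [habs]
    calc (4 * ε) ^ m = ∏ _i : Fin m, (4 * ε) := by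
          simp [Finset.prod_const]
      _ ≤ _ := by
          refine Finset.prod_le_prod (fun i _ => by positivity) fun i _ => by nlinarith [harea i]
  have hpos : 0 < |M.det| := lt_of_lt_of_le (by positivity) hle
  refine ⟨hle, hpos, ?_⟩
  exact (Matrix.isUnit_iff_isUnit_det M).2 (isUnit_iff_ne_zero.2 (abs_pos.mp hpos))
end

section
/- Relaxation soundness for the equal-length constraint: let d(t¹), d(t²) ∈ [−B/2, B/2]² satisfy ‖d(t¹)‖² = ‖d(t²)‖². Then there exist SOS2 overestimators X̃, Ỹ of the squares of the coordinates of d(t¹) and d(t²) such that ‖d(t¹)‖² ≤ X̃(t²) + Ỹ(t²) and ‖d(t²)‖² ≤ X̃(t¹) + Ỹ(t¹); i.e., the relaxed constraint set is an outer approximation of the exact feasible set. -/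
/-!
Each coordinate `x ∈ [−B/2, B/2]` lies between two adjacent grid points, so it is the convex
combination of those two with weights `1 − t, t`; this is an SOS2 representation. By convexity of
`x ↦ x²` (Jensen), every SOS2 overestimator `v` of `x` satisfies `x² ≤ v`, so summing the two
coordinates and using `‖d(t¹)‖² = ‖d(t²)‖²` gives both relaxed constraints.
-/

/-- `SOS2Rep B S x v` : `v = ∑ λₛ αₛ²` for some SOS2 convex combination `λ`
representing `x` on the uniform grid `αₛ = sB/S − B/2` of `[−B/2, B/2]`. -/
def SOS2Rep (B : ℝ) (S : ℕ) (x v : ℝ) : Prop :=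
  ∃ lam : Fin (S + 1) → ℝ,
    (∀ s, 0 ≤ lam s) ∧ (∑ s, lam s = 1) ∧
    (∑ s, lam s * ((s : ℝ) * B / S - B / 2) = x) ∧
    (∑ s, lam s * ((s : ℝ) * B / S - B / 2) ^ 2 = v) ∧
    (∃ s₀ : ℕ, ∀ s : Fin (S + 1), lam s ≠ 0 → (s : ℕ) = s₀ ∨ (s : ℕ) = s₀ + 1)

theorem SOS2Rep.sq_le {B : ℝ} {S : ℕ} {x v : ℝ} (h : SOS2Rep B S x v) : x ^ 2 ≤ v := by
  obtain ⟨lam, hnonneg, hsum, rfl, rfl, -⟩ := h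
  simpa only [smul_eq_mul] using
    (even_two.convexOn_pow (𝕜 := ℝ)).map_sum_le (fun s _ => hnonneg s) hsum
      (fun _ _ => Set.mem_univ _)

theorem exists_nat_le_le_succ {u : ℝ} {S : ℕ} (hS : 1 ≤ S) (hu₀ : 0 ≤ u) (huS : u ≤ S) :
    ∃ n : ℕ, n + 1 ≤ S ∧ (n : ℝ) ≤ u ∧ u ≤ n + 1 := by
  rcases huS.lt_or_eq with hlt | rfl
  · exact ⟨⌊u⌋₊, Nat.succ_le_of_lt ((Nat.floor_lt hu₀).2 hlt), Nat.floor_le hu₀,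
      (Nat.lt_floor_add_one u).le⟩
  · refine ⟨S - 1, by omega, ?_, ?_⟩ <;> simp [Nat.cast_sub hS]

theorem sos2Rep_adjacent (B : ℝ) {S n : ℕ} (hn : n + 1 ≤ S) {t : ℝ} (ht₀ : 0 ≤ t) (ht₁ : t ≤ 1) :
    SOS2Rep B S ((1 - t) * (n * B / S - B / 2) + t * ((n + 1 : ℕ) * B / S - B / 2))
      ((1 - t) * (n * B / S - B / 2) ^ 2 + t * ((n + 1 : ℕ) * B / S - B / 2) ^ 2) := by
  let i : Fin (S + 1) := ⟨n, by omega⟩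
  let j : Fin (S + 1) := ⟨n + 1, by omega⟩
  let lam : Fin (S + 1) → ℝ := Pi.single i (1 - t) + Pi.single j t
  have two_point (f : Fin (S + 1) → ℝ) : ∑ s, lam s * f s = (1 - t) * f i + t * f j := by
    simp [lam, add_mul, Finset.sum_add_distrib, Pi.single_apply, ite_mul]
  refine ⟨lam, fun s => ?_, ?_, two_point _, two_point _, n, fun s hs => ?_⟩
  · simp only [lam, Pi.add_apply, Pi.single_apply]
    split_ifs <;> linarith
  · simpa using two_point 1
  · by_contra! hne
    have hsi : s ≠ i := fun h => hne.1 (by simp [h, i])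
    have hsj : s ≠ j := fun h => hne.2 (by simp [h, j])
    simp [lam, hsi, hsj] at hs

theorem exists_sos2Rep {B : ℝ} (hB : 0 < B) {S : ℕ} (hS : 1 ≤ S) {x : ℝ}
    (hx₀ : -(B / 2) ≤ x) (hx₁ : x ≤ B / 2) : ∃ v, SOS2Rep B S x v := by
  have hS₀ : (0 : ℝ) < S := by exact_mod_cast hS
  set u := (x + B / 2) * S / B with hu
  obtain ⟨n, hnS, hnu, hun⟩ := exists_nat_le_le_succ hS (u := u)
    (by rw [hu]; exact div_nonneg (mul_nonneg (by linarith) hS₀.le) hB.le)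
    (by rw [hu, div_le_iff₀ hB]; nlinarith)
  have hx : x = (1 - (u - n)) * (n * B / S - B / 2) + (u - n) * ((n + 1 : ℕ) * B / S - B / 2) := by
    rw [hu]; field_simp; push_cast; ring
  exact ⟨_, hx ▸ sos2Rep_adjacent B hnS (by linarith) (by linarith)⟩

/-- Relaxation soundness: any pair of points of the box with equal squared norms admits
SOS2 overestimators of the squared coordinates satisfying the relaxed equal-length
constraints. -/
theorem stmt_9 (B : ℝ) (hB : 0 < B) (S : ℕ) (hS : 1 ≤ S)
    (X₁ Y₁ X₂ Y₂ : ℝ)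
    (hX₁ : -(B / 2) ≤ X₁ ∧ X₁ ≤ B / 2) (hY₁ : -(B / 2) ≤ Y₁ ∧ Y₁ ≤ B / 2)
    (hX₂ : -(B / 2) ≤ X₂ ∧ X₂ ≤ B / 2) (hY₂ : -(B / 2) ≤ Y₂ ∧ Y₂ ≤ B / 2)
    (heq : X₁ ^ 2 + Y₁ ^ 2 = X₂ ^ 2 + Y₂ ^ 2) :
    ∃ Xt₁ Yt₁ Xt₂ Yt₂ : ℝ,
      SOS2Rep B S X₁ Xt₁ ∧ SOS2Rep B S Y₁ Yt₁ ∧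
      SOS2Rep B S X₂ Xt₂ ∧ SOS2Rep B S Y₂ Yt₂ ∧
      X₁ ^ 2 + Y₁ ^ 2 ≤ Xt₂ + Yt₂ ∧
      X₂ ^ 2 + Y₂ ^ 2 ≤ Xt₁ + Yt₁ := by
  obtain ⟨Xt₁, hXt₁⟩ := exists_sos2Rep hB hS hX₁.1 hX₁.2
  obtain ⟨Yt₁, hYt₁⟩ := exists_sos2Rep hB hS hY₁.1 hY₁.2
  obtain ⟨Xt₂, hXt₂⟩ := exists_sos2Rep hB hS hX₂.1 hX₂.2
  obtain ⟨Yt₂, hYt₂⟩ := exists_sos2Rep hB hS hY₂.1 hY₂.2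
  refine ⟨Xt₁, Yt₁, Xt₂, Yt₂, hXt₁, hYt₁, hXt₂, hYt₂, ?_, ?_⟩
  · linarith [hXt₂.sq_le, hYt₂.sq_le]
  · linarith [hXt₁.sq_le, hYt₁.sq_le]
end

section
/- As S → ∞, the relaxation error of the piecewise-linear overestimation of the equal-length constraint vanishes: any pair (d(t¹), d(t²)) ∈ ([−B/2,B/2]²)² feasible for the relaxed constraints with grid parameter S satisfies |‖d(t¹)‖² − ‖d(t²)‖²| ≤ B²/(2S²). -/
lemma SOS2Rep_bounds (B : ℝ) (hB : 0 < B) (S : ℕ) (hS : 1 ≤ S) (x v : ℝ)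
    (h : SOS2Rep B S x v) : x ^ 2 ≤ v ∧ v ≤ x ^ 2 + B ^ 2 / (4 * (S : ℝ) ^ 2) := by
  obtain ⟨lam, hnn, hsum, hx, hv, s₀, hs₀⟩ := h
  have hSpos : (0:ℝ) < (S:ℝ) := by exact_mod_cast hS
  have hSne : (S:ℝ) ≠ 0 := ne_of_gt hSpos
  set α : Fin (S+1) → ℝ := fun s => (s:ℝ) * B / S - B / 2 with hα
  by_cases hcase : s₀ + 1 ≤ S
  · set i : Fin (S+1) := ⟨s₀, by omega⟩ with hi
    set j : Fin (S+1) := ⟨s₀+1, by omega⟩ with hj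
    have hij : i ≠ j := by simp [hi, hj, Fin.ext_iff]
    have hzero : ∀ s, s ≠ i → s ≠ j → lam s = 0 := by
      intro s h1 h2
      by_contra h
      rcases hs₀ s h with h' | h'
      · exact h1 (Fin.ext h')
      · exact h2 (Fin.ext h')
    have key : ∀ g : Fin (S+1) → ℝ, ∑ s, lam s * g s = lam i * g i + lam j * g j := by
      intro g
      have hp := Finset.sum_pair (f := fun s => lam s * g s) hij
      rw [← hp]
      refine (Finset.sum_subset (Finset.subset_univ _) ?_).symm
      intro s _ hs
      simp only [Finset.mem_insert, Finset.mem_singleton, not_or] at hs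
      rw [hzero s hs.1 hs.2, zero_mul]
    have h1 : lam i + lam j = 1 := by
      have := key (fun _ => 1); simp only [mul_one] at this; rw [← this]; exact hsum
    have hxe : lam i * α i + lam j * α j = x := by rw [← key α]; exact hx
    have hve : lam i * (α i)^2 + lam j * (α j)^2 = v := by
      rw [← key (fun s => (α s)^2)]; exact hv
    have hgap : α j - α i = B / S := by
      simp only [hα, hi, hj]
      push_cast
      field_simp
      ring
    have hprod : lam i * lam j ≤ 1/4 := by nlinarith [sq_nonneg (lam i - lam j)]
    have hj1 : lam j = 1 - lam i := by linarith
    have hdiff : v - x ^ 2 = lam i * lam j * (α j - α i) ^ 2 := by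
      rw [← hve, ← hxe, hj1]; ring
    constructor
    · nlinarith [mul_nonneg (mul_nonneg (hnn i) (hnn j)) (sq_nonneg (α j - α i))]
    · rw [hgap] at hdiff
      have hle : lam i * lam j * (B / S) ^ 2 ≤ 1/4 * (B / S) ^ 2 :=
        mul_le_mul_of_nonneg_right hprod (sq_nonneg _)
      have heq : 1/4 * (B / (S:ℝ)) ^ 2 = B ^ 2 / (4 * (S:ℝ) ^ 2) := by
        field_simp
      linarith
  · by_cases hcase2 : s₀ ≤ S
    · set i : Fin (S+1) := ⟨s₀, by omega⟩ with hi
      have hzero : ∀ s, s ≠ i → lam s = 0 := by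
        intro s h1
        by_contra h
        rcases hs₀ s h with h' | h'
        · exact h1 (Fin.ext h')
        · have := s.isLt; omega
      have key : ∀ g : Fin (S+1) → ℝ, ∑ s, lam s * g s = lam i * g i := by
        intro g
        rw [← Finset.sum_singleton (fun s => lam s * g s) i]
        refine (Finset.sum_subset (Finset.subset_univ _) ?_).symm
        intro s _ hs
        simp only [Finset.mem_singleton] at hs
        rw [hzero s hs, zero_mul]
      have h1 : lam i = 1 := by
        have := key (fun _ => 1); simp only [mul_one] at this; rw [← this]; exact hsum
      have hxe : α i = x := by have := key α; rw [h1, one_mul] at this; rw [← this]; exact hx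
      have hve : (α i)^2 = v := by
        have := key (fun s => (α s)^2); rw [h1, one_mul] at this; rw [← this]; exact hv
      have : v = x^2 := by rw [← hve, hxe]
      constructor
      · linarith
      · have : 0 ≤ B^2 / (4 * (S:ℝ)^2) := by positivity
        linarith
    · exfalso
      have : ∀ s : Fin (S+1), lam s = 0 := by
        intro s
        by_contra h
        rcases hs₀ s h with h' | h' <;> (have := s.isLt; omega)
      rw [Finset.sum_congr rfl (fun s _ => this s)] at hsum
      simp at hsum

/-- Vanishing relaxation error: any pair feasible for the relaxed equal-length constraints
with grid parameter `S` has squared norms differing by at most `B²/(2S²)`. -/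
theorem stmt_10 (B : ℝ) (hB : 0 < B) (S : ℕ) (hS : 1 ≤ S)
    (X₁ Y₁ X₂ Y₂ Xt₁ Yt₁ Xt₂ Yt₂ : ℝ)
    (hX₁ : -(B / 2) ≤ X₁ ∧ X₁ ≤ B / 2) (hY₁ : -(B / 2) ≤ Y₁ ∧ Y₁ ≤ B / 2)
    (hX₂ : -(B / 2) ≤ X₂ ∧ X₂ ≤ B / 2) (hY₂ : -(B / 2) ≤ Y₂ ∧ Y₂ ≤ B / 2)
    (hr1 : SOS2Rep B S X₁ Xt₁) (hr2 : SOS2Rep B S Y₁ Yt₁)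
    (hr3 : SOS2Rep B S X₂ Xt₂) (hr4 : SOS2Rep B S Y₂ Yt₂)
    (hc1 : X₁ ^ 2 + Y₁ ^ 2 ≤ Xt₂ + Yt₂)
    (hc2 : X₂ ^ 2 + Y₂ ^ 2 ≤ Xt₁ + Yt₁) :
    |(X₁ ^ 2 + Y₁ ^ 2) - (X₂ ^ 2 + Y₂ ^ 2)| ≤ B ^ 2 / (2 * (S : ℝ) ^ 2) := by
  obtain ⟨h1l, h1u⟩ := SOS2Rep_bounds B hB S hS X₁ Xt₁ hr1
  obtain ⟨h2l, h2u⟩ := SOS2Rep_bounds B hB S hS Y₁ Yt₁ hr2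
  obtain ⟨h3l, h3u⟩ := SOS2Rep_bounds B hB S hS X₂ Xt₂ hr3
  obtain ⟨h4l, h4u⟩ := SOS2Rep_bounds B hB S hS Y₂ Yt₂ hr4
  have hSpos : (0:ℝ) < (S:ℝ)^2 := by positivity
  have hSne : (S:ℝ) ≠ 0 := by positivity
  have hε : B ^ 2 / (4 * (S:ℝ) ^ 2) + B ^ 2 / (4 * (S:ℝ) ^ 2) = B ^ 2 / (2 * (S:ℝ) ^ 2) := by
    field_simp; ring
  rw [abs_le]
  constructor <;> linarith
end

section
/- Flow-based connectivity guarantee (NoWasteConstraint): let K ≥ 2, U ∈ {0,1}^K with U_K = 1, C ∈ {0,1}^{K×K} supported on pairs j < i, and Q_{ji} ≥ 0 with Q_{ji} ≤ C_{ji}·K, such that for every i ∈ {1,…,K−1}: U_i + ∑_{j<i} Q_{ji} = ∑_{k>i} Q_{ik}. Then for every node i with U_i = 1 and i < K, there exists a strictly increasing path i = i_0 < i_1 < ⋯ < i_r = K with C_{i_{m} i_{m+1}} = 1 for all m; i.e., every used node is connected to the end-effector node K through the edge set {(j,i): C_{ji}=1}. -/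
/-- NoWasteConstraint connectivity guarantee: under the flow-balance constraints, every
used node is connected to the end-effector node `K` (index `K−1` here) by a strictly
increasing path of present edges. -/
theorem stmt_12 (K : ℕ) (hK : 2 ≤ K)
    (U : Fin K → ℝ) (C Q : Fin K → Fin K → ℝ)
    (hUbin : ∀ i, U i = 0 ∨ U i = 1)
    (hCbin : ∀ j i, C j i = 0 ∨ C j i = 1)
    (hCsupp : ∀ j i : Fin K, ¬ j < i → C j i = 0)
    (hUK : U ⟨K - 1, by omega⟩ = 1)
    (hQpos : ∀ j i, 0 ≤ Q j i)
    (hQcap : ∀ j i, Q j i ≤ C j i * K)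
    (hbal : ∀ i : Fin K, i ≠ ⟨K - 1, by omega⟩ →
      U i + ∑ j ∈ Finset.univ.filter (fun j => j < i), Q j i =
        ∑ k ∈ Finset.univ.filter (fun k => i < k), Q i k) :
    ∀ i : Fin K, U i = 1 → i ≠ ⟨K - 1, by omega⟩ →
      ∃ (r : ℕ) (p : Fin (r + 1) → Fin K),
        p 0 = i ∧ p (Fin.last r) = ⟨K - 1, by omega⟩ ∧
        ∀ m : Fin r, p m.castSucc < p m.succ ∧ C (p m.castSucc) (p m.succ) = 1 := by
  have hUnn : ∀ i, 0 ≤ U i := by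
    intro i; rcases hUbin i with h | h <;> rw [h] <;> norm_num
  have hinnn : ∀ i : Fin K, 0 ≤ ∑ j ∈ Finset.univ.filter (fun j => j < i), Q j i := by
    intro i; exact Finset.sum_nonneg fun j _ => hQpos j i
  have key : ∀ n : ℕ, ∀ i : Fin K,
      K - 1 - i.val ≤ n →
      0 < U i + ∑ j ∈ Finset.univ.filter (fun j => j < i), Q j i →
      ∃ (r : ℕ) (p : Fin (r + 1) → Fin K),
        p 0 = i ∧ p (Fin.last r) = ⟨K - 1, by omega⟩ ∧
        ∀ m : Fin r, p m.castSucc < p m.succ ∧ C (p m.castSucc) (p m.succ) = 1 := by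
    intro n
    induction n with
    | zero =>
      intro i hn _
      have hi : i = ⟨K - 1, by omega⟩ := by
        have := i.isLt
        ext
        simp only []
        omega
      exact ⟨0, fun _ => i, rfl, by rw [hi], fun m => m.elim0⟩
    | succ n ih =>
      intro i hn hpos
      by_cases hi : i = ⟨K - 1, by omega⟩
      · exact ⟨0, fun _ => i, rfl, by rw [hi], fun m => m.elim0⟩
      · have hout : 0 < ∑ k ∈ Finset.univ.filter (fun k => i < k), Q i k := by
          rw [← hbal i hi]; exact hpos
        obtain ⟨k, hkmem, hQk⟩ := Finset.exists_ne_zero_of_sum_ne_zero hout.ne'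
        have hik : i < k := by simpa using (Finset.mem_filter.mp hkmem).2
        have hQkpos : 0 < Q i k := lt_of_le_of_ne (hQpos i k) (Ne.symm hQk)
        have hCik : C i k = 1 := by
          rcases hCbin i k with h | h
          · exfalso
            have := hQcap i k
            rw [h, zero_mul] at this
            linarith
          · exact h
        -- k has positive input
        have hkin : 0 < U k + ∑ j ∈ Finset.univ.filter (fun j => j < k), Q j k := by
          have hmem : i ∈ Finset.univ.filter (fun j => j < k) := by simpa using hik
          have := Finset.single_le_sum (fun j _ => hQpos j k) hmem
          have := hUnn k
          linarith
        have hklt : k.val < K := k.isLt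
        have hilt : i.val < K - 1 := by
          have := i.isLt
          by_contra h
          apply hi
          ext; omega
        obtain ⟨r, p, hp0, hpl, hpe⟩ := ih k (by omega) hkin
        refine ⟨r + 1, Fin.cons i p, Fin.cons_zero _ _, ?_, ?_⟩
        · rw [← Fin.succ_last, Fin.cons_succ]; exact hpl
        · intro m
          induction m using Fin.cases with
          | zero =>
            simp only [Fin.castSucc_zero, Fin.cons_zero, Fin.succ_zero_eq_one]
            have h1 : (1 : Fin (r + 2)) = (0 : Fin (r + 1)).succ := rfl
            rw [h1, Fin.cons_succ, hp0]
            exact ⟨hik, hCik⟩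
          | succ j =>
            rw [← Fin.succ_castSucc, Fin.cons_succ, Fin.cons_succ]
            exact hpe j
  intro i hUi hiK
  apply key (K - 1 - i.val) i le_rfl
  have := hinnn i
  rw [hUi]; linarith
end

section
/- SOS1 binary encoding correctness: let i ≥ 1 and introduce binary variables 𝕀_1,…,𝕀_{⌈log₂ i⌉} ∈ {0,1}. For nonnegative variables C_0,…,C_{i−1} ∈ [0,1] with ∑_j C_j = 1, impose for each j and each bit b: C_j ≤ 𝕀_b if the b-th bit of j is 0, and C_j ≤ 1 − 𝕀_b otherwise. Then exactly one C_j equals 1 (namely j whose binary representation matches the complement pattern of 𝕀) and all others equal 0; conversely, any 0/1 vector with exactly one nonzero entry admits a choice of 𝕀 satisfying these constraints. -/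
/-- SOS1 logarithmic binary-encoding correctness: under the bit constraints, exactly one
`C j` equals `1` and all others equal `0`; conversely, every single-nonzero 0/1 vector
admits a feasible choice of the auxiliary binaries. -/
theorem stmt_14 (i : ℕ) (hi : 1 ≤ i)
    (C : Fin i → ℝ) (I : Fin (Nat.clog 2 i) → ℝ)
    (hIbin : ∀ b, I b = 0 ∨ I b = 1)
    (hCrange : ∀ j, 0 ≤ C j ∧ C j ≤ 1)
    (hsum : ∑ j, C j = 1)
    (hcons : ∀ (j : Fin i) (b : Fin (Nat.clog 2 i)),
      (Nat.testBit (j : ℕ) (b : ℕ) = false → C j ≤ I b) ∧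
      (Nat.testBit (j : ℕ) (b : ℕ) = true → C j ≤ 1 - I b)) :
    (∃ j : Fin i, C j = 1 ∧ ∀ j' : Fin i, j' ≠ j → C j' = 0) ∧
    (∀ j : Fin i, ∃ I' : Fin (Nat.clog 2 i) → ℝ,
      (∀ b, I' b = 0 ∨ I' b = 1) ∧
      ∀ (j' : Fin i) (b : Fin (Nat.clog 2 i)),
        (Nat.testBit (j' : ℕ) (b : ℕ) = false →
          (if j' = j then (1 : ℝ) else 0) ≤ I' b) ∧
        (Nat.testBit (j' : ℕ) (b : ℕ) = true →
          (if j' = j then (1 : ℝ) else 0) ≤ 1 - I' b)) := by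
  constructor
  · have hpos : ∃ j, 0 < C j := by
      by_contra h
      push_neg at h
      have : ∑ j, C j ≤ 0 := Finset.sum_nonpos (fun j _ => h j)
      linarith
    obtain ⟨j, hj⟩ := hpos
    have hzero : ∀ j' : Fin i, j' ≠ j → C j' = 0 := by
      intro j' hne
      by_contra hC
      have hj' : 0 < C j' := lt_of_le_of_ne (hCrange j').1 (Ne.symm hC)
      have hne' : (j' : ℕ) ≠ (j : ℕ) := fun h => hne (Fin.ext h)
      have hex : ∃ b, Nat.testBit (j' : ℕ) b ≠ Nat.testBit (j : ℕ) b := by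
        by_contra h
        push_neg at h
        exact hne' (Nat.eq_of_testBit_eq h)
      obtain ⟨b, hb⟩ := hex
      have hblt : b < Nat.clog 2 i := by
        by_contra hge
        push_neg at hge
        have hle : i ≤ 2 ^ b :=
          le_trans (Nat.le_pow_clog one_lt_two i) (Nat.pow_le_pow_right (by norm_num) hge)
        have h1 : (j' : ℕ) < 2 ^ b := lt_of_lt_of_le j'.isLt hle
        have h2 : (j : ℕ) < 2 ^ b := lt_of_lt_of_le j.isLt hle
        exact hb (by rw [Nat.testBit_eq_false_of_lt h1, Nat.testBit_eq_false_of_lt h2])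
      set bf : Fin (Nat.clog 2 i) := ⟨b, hblt⟩
      have hc1 := hcons j' bf
      have hc2 := hcons j bf
      rcases hIbin bf with hI | hI <;>
        cases htb' : Nat.testBit (j' : ℕ) b <;>
        cases htb : Nat.testBit (j : ℕ) b <;>
        simp [htb', htb] at hb <;>
        [skip; skip; skip; skip] <;>
        first
        | (have := hc1.1 htb'; have := hc2.2 htb; linarith)
        | (have := hc1.2 htb'; have := hc2.1 htb; linarith)
    refine ⟨j, ?_, hzero⟩
    have : ∑ j', C j' = C j := Finset.sum_eq_single j (fun j' _ h => hzero j' h) (by simp)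
    linarith [this, hsum]
  · intro j
    refine ⟨fun b => if Nat.testBit (j : ℕ) (b : ℕ) then 0 else 1, ?_, ?_⟩
    · intro b; by_cases h : Nat.testBit (j : ℕ) (b : ℕ) <;> simp [h]
    · intro j' b
      constructor <;> intro htb <;> by_cases hjj : j' = j
      · subst hjj; simp [htb]
      · simp only [if_neg hjj]
        by_cases h : Nat.testBit (j : ℕ) (b : ℕ) <;> simp [h]
      · subst hjj; simp [htb]
      · simp only [if_neg hjj]
        by_cases h : Nat.testBit (j : ℕ) (b : ℕ) <;> simp [h] <;> norm_num
end
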